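/- For every i ∈ ℕ, the following identity holds in U(sl₂): e^i f^i = ∏_{j=1}^{i} (Λ − (h − 2j + 2)(h − 2j)/4). -/

import Mathlib

open scoped TensorProduct

noncomputable section

namespace RacahPaper

variable (F : Type) [Field F]

/-- Defining relations of `U(sl₂)`: generators `e = ι 0`, `f = ι 1`, `h = ι 2` with
`he - eh = 2e`, `hf - fh = -2f`, `ef - fe = h`. -/
inductive slRel : FreeAlgebra F (Fin 3) → FreeAlgebra F (Fin 3) → Prop
  | he : slRel (FreeAlgebra.ι F 2 * FreeAlgebra.ι F 0 - FreeAlgebra.ι F 0 * FreeAlgebra.ι F 2)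
      (2 * FreeAlgebra.ι F 0)
  | hf : slRel (FreeAlgebra.ι F 2 * FreeAlgebra.ι F 1 - FreeAlgebra.ι F 1 * FreeAlgebra.ι F 2)
      (-(2 * FreeAlgebra.ι F 1))
  | ef : slRel (FreeAlgebra.ι F 0 * FreeAlgebra.ι F 1 - FreeAlgebra.ι F 1 * FreeAlgebra.ι F 0)
      (FreeAlgebra.ι F 2)

/-- The universal enveloping algebra `U(sl₂)`. -/
abbrev U := RingQuot (slRel F)

/-- The generator `e` of `U(sl₂)`. -/
def e : U F := RingQuot.mkAlgHom F (slRel F) (FreeAlgebra.ι F 0)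

/-- The generator `f` of `U(sl₂)`. -/
def f : U F := RingQuot.mkAlgHom F (slRel F) (FreeAlgebra.ι F 1)

/-- The generator `h` of `U(sl₂)`. -/
def h : U F := RingQuot.mkAlgHom F (slRel F) (FreeAlgebra.ι F 2)

/-- The equitable generator `x = -f - h/2`. -/
def ux : U F := -f F - (2 : F)⁻¹ • h F

/-- The equitable generator `y = h/2`. -/
def uy : U F := (2 : F)⁻¹ • h F

/-- The equitable generator `z = e - h/2`. -/
def uz : U F := e F - (2 : F)⁻¹ • h F

/-- The normalized Casimir element `Λ = ef + h(h-2)/4` of `U(sl₂)`. -/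
def Lam : U F := e F * f F + (4 : F)⁻¹ • (h F * (h F - 2))

/-- `ν_x = f/2`. -/
def nux : U F := (2 : F)⁻¹ • f F

/-- `ν_z = e/2`. -/
def nuz : U F := (2 : F)⁻¹ • e F

/-- `U_n`: the span of the `e^i h^j f^k` with `k - i = n`. -/
def Usub (n : ℤ) : Submodule F (U F) :=
  Submodule.span F {u : U F | ∃ i j k : ℕ, (k : ℤ) - (i : ℤ) = n ∧ u = e F ^ i * h F ^ j * f F ^ k}

-- Racah algebra
/-- Generator `A` of the free algebra. -/
def fA : FreeAlgebra F (Fin 4) := FreeAlgebra.ι F 0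
/-- Generator `B` of the free algebra. -/
def fB : FreeAlgebra F (Fin 4) := FreeAlgebra.ι F 1
/-- Generator `C` of the free algebra. -/
def fC : FreeAlgebra F (Fin 4) := FreeAlgebra.ι F 2
/-- Generator `D` of the free algebra. -/
def fD : FreeAlgebra F (Fin 4) := FreeAlgebra.ι F 3

/-- `α = [A,D] + AC - BA` in the free algebra. -/
def falpha : FreeAlgebra F (Fin 4) := (fA F * fD F - fD F * fA F) + fA F * fC F - fB F * fA F
/-- `β = [B,D] + BA - CB` in the free algebra. -/
def fbeta : FreeAlgebra F (Fin 4) := (fB F * fD F - fD F * fB F) + fB F * fA F - fC F * fB F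
/-- `γ = [C,D] + CB - AC` in the free algebra. -/
def fgamma : FreeAlgebra F (Fin 4) := (fC F * fD F - fD F * fC F) + fC F * fB F - fA F * fC F

/-- Defining relations of the Racah algebra: `[A,B] = [B,C] = [C,A] = 2D` and each of
`α, β, γ` commutes with each of the generators `A, B, C, D`. -/
inductive racahRel : FreeAlgebra F (Fin 4) → FreeAlgebra F (Fin 4) → Prop
  | AB : racahRel (fA F * fB F - fB F * fA F) (2 * fD F)
  | BC : racahRel (fB F * fC F - fC F * fB F) (2 * fD F)
  | CA : racahRel (fC F * fA F - fA F * fC F) (2 * fD F)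
  | calpha (i : Fin 4) : racahRel (falpha F * FreeAlgebra.ι F i) (FreeAlgebra.ι F i * falpha F)
  | cbeta (i : Fin 4) : racahRel (fbeta F * FreeAlgebra.ι F i) (FreeAlgebra.ι F i * fbeta F)
  | cgamma (i : Fin 4) : racahRel (fgamma F * FreeAlgebra.ι F i) (FreeAlgebra.ι F i * fgamma F)

/-- The Racah algebra `ℜ`. -/
abbrev Racah := RingQuot (racahRel F)

/-- Generator `A` of the Racah algebra. -/
def A : Racah F := RingQuot.mkAlgHom F (racahRel F) (fA F)
/-- Generator `B` of the Racah algebra. -/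
def B : Racah F := RingQuot.mkAlgHom F (racahRel F) (fB F)
/-- Generator `C` of the Racah algebra. -/
def C : Racah F := RingQuot.mkAlgHom F (racahRel F) (fC F)
/-- Generator `D` of the Racah algebra. -/
def D : Racah F := RingQuot.mkAlgHom F (racahRel F) (fD F)

/-- `α = [A,D] + AC - BA` in the Racah algebra. -/
def alpha : Racah F := (A F * D F - D F * A F) + A F * C F - B F * A F
/-- `β = [B,D] + BA - CB` in the Racah algebra. -/
def beta : Racah F := (B F * D F - D F * B F) + B F * A F - C F * B F
/-- `γ = [C,D] + CB - AC` in the Racah algebra. -/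
def gamma : Racah F := (C F * D F - D F * C F) + C F * B F - A F * C F
/-- `δ = A + B + C` in the Racah algebra. -/
def delta : Racah F := A F + B F + C F

/-- `Ω_A = D² + (BAC + CAB)/2 + A² + Bγ - Cβ - Aδ`. -/
def OmegaA : Racah F :=
  D F ^ 2 + (2 : F)⁻¹ • (B F * A F * C F + C F * A F * B F) + A F ^ 2
    + B F * gamma F - C F * beta F - A F * delta F

/-- `Ω_B = D² + (CBA + ABC)/2 + B² + Cα - Aγ - Bδ`. -/
def OmegaB : Racah F :=
  D F ^ 2 + (2 : F)⁻¹ • (C F * B F * A F + A F * B F * C F) + B F ^ 2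
    + C F * alpha F - A F * gamma F - B F * delta F

/-- `Ω_C = D² + (ACB + BCA)/2 + C² + Aβ - Bα - Cδ`. -/
def OmegaC : Racah F :=
  D F ^ 2 + (2 : F)⁻¹ • (A F * C F * B F + B F * C F * A F) + C F ^ 2
    + A F * beta F - B F * alpha F - C F * delta F

-- the tensor algebra F[a,b,c] ⊗ U(sl2)
/-- The polynomial algebra `F[a,b,c]`. -/
abbrev P := MvPolynomial (Fin 3) F

/-- The tensor product algebra `F[a,b,c] ⊗ U(sl₂)`. -/
abbrev T := P F ⊗[F] U F

/-- The indeterminate `a`. -/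
def pa : P F := MvPolynomial.X 0
/-- The indeterminate `b`. -/
def pb : P F := MvPolynomial.X 1
/-- The indeterminate `c`. -/
def pc : P F := MvPolynomial.X 2

/-- `A♮`. -/
def Anat : T F :=
  (pa F * (pa F + 1)) ⊗ₜ[F] (1 : U F) + (pb F - pc F - pa F) ⊗ₜ[F] ux F
    + (pa F + pb F - pc F + 1) ⊗ₜ[F] uy F - (1 : P F) ⊗ₜ[F] (ux F * uy F)

/-- `B♮`. -/
def Bnat : T F :=
  (pb F * (pb F + 1)) ⊗ₜ[F] (1 : U F) + (pc F - pa F - pb F) ⊗ₜ[F] uy F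
    + (pb F + pc F - pa F + 1) ⊗ₜ[F] uz F - (1 : P F) ⊗ₜ[F] (uy F * uz F)

/-- `C♮`. -/
def Cnat : T F :=
  (pc F * (pc F + 1)) ⊗ₜ[F] (1 : U F) + (pa F - pb F - pc F) ⊗ₜ[F] uz F
    + (pc F + pa F - pb F + 1) ⊗ₜ[F] ux F - (1 : P F) ⊗ₜ[F] (uz F * ux F)

/-- `D♮`. -/
def Dnat : T F :=
  (1 : P F) ⊗ₜ[F] (uz F * uy F * ux F + uz F * ux F)
    + (pc F + pb F * (pc F + pa F - pb F)) ⊗ₜ[F] ux F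
    + (pa F + pc F * (pa F + pb F - pc F)) ⊗ₜ[F] uy F
    + (pb F + pa F * (pb F + pc F - pa F)) ⊗ₜ[F] uz F
    + (pb F - pc F) ⊗ₜ[F] (ux F * uy F)
    + (pc F - pa F) ⊗ₜ[F] (uy F * uz F)
    + (pa F - pb F) ⊗ₜ[F] (uz F * ux F)

/-- `R = 2 ⊗ yν_x + 2(c+a-b+1) ⊗ ν_x`. -/
def Rel : T F :=
  (2 : P F) ⊗ₜ[F] (uy F * nux F) + (2 * (pc F + pa F - pb F + 1)) ⊗ₜ[F] nux F

/-- `L = -2 ⊗ yν_z - 2(a-b-c-1) ⊗ ν_z`. -/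
def Lel : T F :=
  -((2 : P F) ⊗ₜ[F] (uy F * nuz F)) - (2 * (pa F - pb F - pc F - 1)) ⊗ₜ[F] nuz F

/-- `θ = 1⊗y - b⊗1`. -/
def theta : T F := (1 : P F) ⊗ₜ[F] uy F - pb F ⊗ₜ[F] (1 : U F)

/-- `ϑ = 1⊗y + a⊗1`. -/
def vartheta : T F := (1 : P F) ⊗ₜ[F] uy F + pa F ⊗ₜ[F] (1 : U F)

/-- `F[a,b,c] ⊗ U_n` as a subspace of `F[a,b,c] ⊗ U(sl₂)`. -/
def TU (n : ℤ) : Submodule F (T F) :=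
  Submodule.span F {t : T F | ∃ (p : P F) (u : U F), u ∈ Usub F n ∧ t = p ⊗ₜ[F] u}

/-!
Since `h f = f (h - 2)`, moving `f` to the left past a polynomial in `h` shifts `h` by `-2`, while
the Casimir element `Λ` commutes with `f`. Hence the `j`-th factor
`g j = Λ - (h - 2j)(h - 2j - 2)/4` satisfies `g j * f = f * g (j + 1)`, and `e f = g 0`, so that
`e^(n+1) f^(n+1) = e (g 0 ⋯ g (n-1)) f = e f (g 1 ⋯ g n) = g 0 g 1 ⋯ g n`.
-/

theorem _root_.List.prod_range_map_mul_eq_mul_prod_range_map_succ {M : Type*} [Monoid M]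
    (a : ℕ → M) (x : M) (ha : ∀ j, a j * x = x * a (j + 1)) (m : ℕ) :
    ((List.range m).map a).prod * x = x * ((List.range m).map fun j => a (j + 1)).prod := by
  induction m with
  | zero => simp
  | succ m ih =>
    simp only [List.range_succ, List.map_append, List.prod_append, List.map_singleton,
      List.prod_singleton]
    rw [mul_assoc, ha, ← mul_assoc, ih, mul_assoc]

theorem _root_.pow_mul_pow_eq_prod_range {M : Type*} [Monoid M] (a : ℕ → M) (x y : M)
    (hyx : y * x = a 0) (ha : ∀ j, a j * x = x * a (j + 1)) (n : ℕ) :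
    y ^ n * x ^ n = ((List.range n).map a).prod := by
  induction n with
  | zero => simp
  | succ n ih =>
    calc y ^ (n + 1) * x ^ (n + 1) = y * (y ^ n * x ^ n) * x := by
          rw [pow_succ', pow_succ, mul_assoc, mul_assoc, mul_assoc]
      _ = a 0 * ((List.range n).map fun j => a (j + 1)).prod := by
          rw [ih, mul_assoc, List.prod_range_map_mul_eq_mul_prod_range_map_succ a x ha,
            ← mul_assoc, hyx]
      _ = ((List.range (n + 1)).map a).prod := by
          rw [List.range_succ_eq_map, List.map_cons, List.prod_cons, List.map_map]
          rfl

theorem h_mul_f : h F * f F = f F * (h F - 2) := by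
  have hf : h F * f F - f F * h F = -(2 * f F) := by
    simpa [h, f, map_ofNat] using RingQuot.mkAlgHom_rel F (slRel.hf (F := F))
  rw [mul_sub, ← sub_eq_zero, ← sub_add, hf]
  noncomm_ring

theorem e_mul_f : e F * f F = f F * e F + h F := by
  have ef : e F * f F - f F * e F = h F := by
    simpa [e, f, h] using RingQuot.mkAlgHom_rel F (slRel.ef (F := F))
  rw [← ef]
  abel

theorem h_sub_mul_f {c : U F} (hc : Commute c (f F)) :
    (h F - c) * f F = f F * (h F - c - 2) := by
  rw [sub_mul, h_mul_f, hc.eq, mul_sub, mul_sub, mul_sub, sub_right_comm]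

theorem h_sub_add_two_mul_h_sub_mul_f {c : U F} (hc : Commute c (f F)) :
    (h F - c + 2) * (h F - c) * f F = f F * ((h F - c) * (h F - c - 2)) := by
  have hc2 : Commute (c - 2) (f F) := hc.sub_left (Commute.ofNat_left 2 _)
  rw [mul_assoc, h_sub_mul_f F hc, ← mul_assoc, sub_add, h_sub_mul_f F hc2, sub_sub,
    sub_add_cancel, mul_assoc]

theorem Lam_mul_f (hchar : (2 : F) ≠ 0) : Lam F * f F = f F * Lam F := by
  have h4 : (4 : F) ≠ 0 := by
    simpa [show (4 : F) = 2 * 2 by norm_num] using hchar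
  have hquad : h F * (h F - 2) * f F = f F * ((h F - 2) * (h F - 2 - 2)) := by
    simpa only [sub_add_cancel] using h_sub_add_two_mul_h_sub_mul_f F (Commute.ofNat_left 2 _)
  have hef : e F * f F * f F = f F * (e F * f F) + f F * (h F - 2) := by
    rw [e_mul_f, add_mul, h_mul_f, mul_assoc, e_mul_f]
  have hpoly : h F * (h F - 2) = (h F - 2) * (h F - 2 - 2) + (4 : F) • (h F - 2) := by
    rw [Algebra.smul_def, map_ofNat]
    simp only [mul_sub, sub_mul, (Commute.ofNat_left 2 (h F)).eq,
      (Commute.ofNat_left 4 (h F)).eq]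
    noncomm_ring
  unfold Lam
  rw [add_mul, smul_mul_assoc, hquad, hef, hpoly, smul_add, smul_smul, inv_mul_cancel₀ h4,
    one_smul, mul_add, mul_add, mul_smul_comm]
  abel

def casimirFactor (j : ℕ) : U F :=
  Lam F - (4 : F)⁻¹ • ((h F - 2 * ((j : U F) + 1) + 2) * (h F - 2 * ((j : U F) + 1)))

theorem e_mul_f_eq_casimirFactor_zero : e F * f F = casimirFactor F 0 := by
  simp [casimirFactor, Lam]

theorem casimirFactor_mul_f (hchar : (2 : F) ≠ 0) (j : ℕ) :
    casimirFactor F j * f F = f F * casimirFactor F (j + 1) := by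
  have hc : Commute (2 * ((j : U F) + 1)) (f F) :=
    (Commute.ofNat_left 2 _).mul_left ((Nat.cast_commute j _).add_left (Commute.one_left _))
  have hsucc : h F - 2 * (((j + 1 : ℕ) : U F) + 1) = h F - 2 * ((j : U F) + 1) - 2 := by
    push_cast
    rw [mul_add 2 _ 1, mul_one, sub_sub]
  rw [casimirFactor, casimirFactor, hsucc, sub_add_cancel, sub_mul, Lam_mul_f F hchar,
    smul_mul_assoc, h_sub_add_two_mul_h_sub_mul_f F hc, mul_sub (f F), mul_smul_comm]

theorem statement7 (hchar : (2 : F) ≠ 0) (i : ℕ) :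
    e F ^ i * f F ^ i =
      ((List.range i).map fun j =>
        Lam F - (4 : F)⁻¹ •
          ((h F - 2 * ((j : U F) + 1) + 2) * (h F - 2 * ((j : U F) + 1)))).prod := by
  -- the elaborated statement casts the whole list `List.range i` into `List (U F)`
  simp only [bind_pure_comp, List.map_eq_map, List.map_map]
  exact pow_mul_pow_eq_prod_range (casimirFactor F) (f F) (e F)
    (e_mul_f_eq_casimirFactor_zero F) (casimirFactor_mul_f F hchar) i

end RacahPaper
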